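/- arXiv:2210.11002 — 7 statements merged into one kernel-verified Lean document; each statement's English description precedes it below -/
import Mathlib

section
/- Let Y be a compact metric space, φ: Y → Y continuous, g: Y → ℝ continuous and bounded by M, and suppose there are disjoint open sets U_p ∋ p, U_q ∋ q, a constant δ > 0, and N ∈ ℕ with: g > δ on U_p, g < −δ on U_q, φ(U_q) ⊂ U_q, and φ^N(Y ∖ U_p) ⊂ U_q. Define gₙ(z) = Σ_{k=0}^{n−1} g(φᵏ(z)). Then for all sufficiently large n, every z with gₙ(z) = 0 satisfies z ∈ U_p. -/
open Function Set

/-! Off `U_p` the orbit enters the trapping region `U_q` within `N` steps and never leaves it, so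
after the first `N` terms (each at most `M`) every summand of `gₙ` is below `-δ`; once `n` is
large the Birkhoff sum is therefore negative, uniformly in the starting point. -/

theorem Set.MapsTo.iterate_mem_of_le {α : Type*} {f : α → α} {s : Set α} (hf : MapsTo f s s)
    {N k : ℕ} (hNk : N ≤ k) {z : α} (hz : f^[N] z ∈ s) : f^[k] z ∈ s := by
  obtain ⟨m, rfl⟩ := Nat.exists_eq_add_of_le hNk
  rw [add_comm, iterate_add_apply]
  exact hf.iterate m hz

theorem sum_range_le_of_le_of_le_neg (u : ℕ → ℝ) {M δ : ℝ} {N n : ℕ} (hNn : N ≤ n)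
    (hM : ∀ k < N, u k ≤ M) (hδ : ∀ k ≥ N, u k ≤ -δ) :
    ∑ k ∈ Finset.range n, u k ≤ N * M - (n - N) * δ := by
  obtain ⟨m, rfl⟩ := Nat.exists_eq_add_of_le hNn
  have hhead : ∑ k ∈ Finset.range N, u k ≤ N * M := by
    simpa using Finset.sum_le_sum fun k hk => hM k (Finset.mem_range.mp hk)
  have htail : ∑ k ∈ Finset.range m, u (N + k) ≤ m * -δ := by
    simpa using Finset.sum_le_sum fun k (_ : k ∈ Finset.range m) => hδ (N + k) (by omega)
  rw [Finset.sum_range_add]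
  push_cast
  linarith

theorem stmt_8_general
    {Y : Type*}
    (φ : Y → Y)
    (g : Y → ℝ)
    (M : ℝ) (hM : ∀ z, |g z| ≤ M)
    (Up Uq : Set Y)
    (δ : ℝ) (hδ : 0 < δ)
    (hgq : ∀ z ∈ Uq, g z < -δ)
    (hinv : MapsTo φ Uq Uq)
    (N : ℕ) (hN : ∀ z, z ∉ Up → φ^[N] z ∈ Uq) :
    ∃ n₀ : ℕ, ∀ n ≥ n₀, ∀ z : Y,
      (∑ k ∈ Finset.range n, g (φ^[k] z)) = 0 → z ∈ Up := by
  obtain ⟨m, hm⟩ := exists_nat_gt (N * M / δ)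
  refine ⟨N + m, fun n hn z hz => ?_⟩
  by_contra hzp
  have hbound := sum_range_le_of_le_of_le_neg (fun k => g (φ^[k] z)) (by omega : N ≤ n)
    (fun k _ => (le_abs_self _).trans (hM _))
    (fun k hk => (hgq _ (hinv.iterate_mem_of_le hk (hN z hzp))).le)
  have hm_le : (m : ℝ) ≤ n - N := by
    rw [le_sub_iff_add_le']
    exact_mod_cast hn
  have hlarge : N * M < (n - N) * δ := calc
    N * M < m * δ := (div_lt_iff₀ hδ).mp hm
    _ ≤ (n - N) * δ := by gcongr
  linarith

/-- First half of the main technical lemma: if `gₙ(z) = 0` for large `n`,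
then `z ∈ U_p`. -/
theorem stmt_8
    {Y : Type*} [MetricSpace Y] [CompactSpace Y]
    (φ : Y → Y) (hφ : Continuous φ)
    (g : Y → ℝ) (hg : Continuous g)
    (M : ℝ) (hM : ∀ z, |g z| ≤ M)
    (p q : Y) (Up Uq : Set Y)
    (hUpo : IsOpen Up) (hUqo : IsOpen Uq) (hdisj : Disjoint Up Uq)
    (hp : p ∈ Up) (hq : q ∈ Uq)
    (δ : ℝ) (hδ : 0 < δ)
    (hgp : ∀ z ∈ Up, δ < g z) (hgq : ∀ z ∈ Uq, g z < -δ)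
    (hinv : MapsTo φ Uq Uq)
    (N : ℕ) (hN : ∀ z, z ∉ Up → φ^[N] z ∈ Uq) :
    ∃ n₀ : ℕ, ∀ n ≥ n₀, ∀ z : Y,
      (∑ k ∈ Finset.range n, g (φ^[k] z)) = 0 → z ∈ Up :=
  stmt_8_general φ g M hM Up Uq δ hδ hgq hinv N hN
end

section
/- Under the same hypotheses (Y compact, g continuous with |g| ≤ M, g > δ on U_p, g < −δ on U_q, φ(U_q) ⊂ U_q, φ^N(Y ∖ U_p) ⊂ U_q, gₙ(z) = Σ_{k=0}^{n−1} g(φᵏ(z))): for all sufficiently large n, every z with gₙ(z) = 0 satisfies φⁿ(z) ∈ U_q. -/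
open Function Set

/-!
If `gₙ(z) = 0`, the orbit of `z` must leave `U_p` at some first time `k < n`. The first `k`
terms of `gₙ(z)` each exceed `δ` and the remaining `n - k` are at least `-M`, so
`k δ ≤ (n - k) M`; once `n δ ≥ N (M + δ)` this forces `k + N ≤ n`. Since `φᵏ(z) ∉ U_p`, its
`N`-th iterate lies in the forward-invariant set `U_q`, hence so does `φⁿ(z)`.
-/

theorem mul_le_sub_mul_of_sum_range_eq_zero {f : ℕ → ℝ} {k n : ℕ} {δ M : ℝ} (hkn : k ≤ n)
    (hlow : ∀ i < k, δ ≤ f i) (hM : ∀ i, -M ≤ f i) (hsum : ∑ i ∈ Finset.range n, f i = 0) :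
    k * δ ≤ (n - k) * M := by
  have hhead : k * δ ≤ ∑ i ∈ Finset.range k, f i := by
    simpa using Finset.card_nsmul_le_sum _ _ δ fun i hi => hlow i (Finset.mem_range.1 hi)
  have htail : (n - k : ℕ) * -M ≤ ∑ i ∈ Finset.Ico k n, f i := by
    simpa using Finset.card_nsmul_le_sum (Finset.Ico k n) f (-M) fun i _ => hM i
  rw [← Finset.sum_range_add_sum_Ico f hkn] at hsum
  push_cast [hkn] at htail
  linarith

theorem add_le_of_mul_le_sub_mul {k n N : ℕ} {δ M : ℝ} (hδ : 0 < δ) (hM : 0 ≤ M)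
    (hk : k * δ ≤ (n - k) * M) (hn : N * (M + δ) ≤ n * δ) : k + N ≤ n := by
  have : ((k + N : ℕ) : ℝ) * (M + δ) ≤ n * (M + δ) := by push_cast; linarith
  exact_mod_cast le_of_mul_le_mul_right this (by linarith)

theorem Set.MapsTo.iterate_apply_mem_of_le {α : Type*} {φ : α → α} {s : Set α}
    (hs : MapsTo φ s s) {x : α} {N m : ℕ} (hx : φ^[N] x ∈ s) (hNm : N ≤ m) :
    φ^[m] x ∈ s := by
  obtain ⟨j, rfl⟩ := Nat.exists_eq_add_of_le hNm
  rw [add_comm, iterate_add_apply]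
  exact hs.iterate j hx

theorem stmt_9_general
    {Y : Type*}
    (φ : Y → Y)
    (g : Y → ℝ)
    (M : ℝ) (hM : ∀ z, |g z| ≤ M)
    (Up Uq : Set Y)
    (δ : ℝ) (hδ : 0 < δ)
    (hgp : ∀ z ∈ Up, δ < g z)
    (hinv : MapsTo φ Uq Uq)
    (N : ℕ) (hN : ∀ z, z ∉ Up → φ^[N] z ∈ Uq) :
    ∃ n₀ : ℕ, ∀ n ≥ n₀, ∀ z : Y,
      (∑ k ∈ Finset.range n, g (φ^[k] z)) = 0 → φ^[n] z ∈ Uq := by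
  classical
  refine ⟨⌈N * (M + δ) / δ⌉₊ + 1, fun n hn z hz => ?_⟩
  have hM0 : 0 ≤ M := (abs_nonneg _).trans (hM z)
  have hnδ : N * (M + δ) ≤ n * δ := by
    rw [← div_le_iff₀ hδ]
    exact (Nat.le_ceil _).trans (by exact_mod_cast (Nat.le_succ _).trans hn)
  obtain ⟨i, hin, hi⟩ : ∃ i < n, φ^[i] z ∉ Up := by
    by_contra! hall
    exact (Finset.sum_pos (fun k hk => hδ.trans (hgp _ (hall k (Finset.mem_range.1 hk))))
      ⟨0, Finset.mem_range.2 (by omega)⟩).ne' hz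
  have hex : ∃ i, φ^[i] z ∉ Up := ⟨i, hi⟩
  have hkn : Nat.find hex ≤ n := ((Nat.find_min' hex hi).trans_lt hin).le
  have hexit := mul_le_sub_mul_of_sum_range_eq_zero hkn
    (fun j hj => (hgp _ (not_not.1 (Nat.find_min hex hj))).le)
    (fun j => neg_le_of_abs_le (hM _)) hz
  have hkN := add_le_of_mul_le_sub_mul hδ hM0 hexit hnδ
  have hφk : φ^[N] (φ^[Nat.find hex] z) ∈ Uq := hN _ (Nat.find_spec hex)
  rw [← iterate_add_apply] at hφk
  exact hinv.iterate_apply_mem_of_le hφk (by omega)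

/-- Second half of the main technical lemma: if `gₙ(z) = 0` for large `n`,
then `φⁿ(z) ∈ U_q`. -/
theorem stmt_9
    {Y : Type*} [MetricSpace Y] [CompactSpace Y]
    (φ : Y → Y) (hφ : Continuous φ)
    (g : Y → ℝ) (hg : Continuous g)
    (M : ℝ) (hM : ∀ z, |g z| ≤ M)
    (p q : Y) (Up Uq : Set Y)
    (hUpo : IsOpen Up) (hUqo : IsOpen Uq) (hdisj : Disjoint Up Uq)
    (hp : p ∈ Up) (hq : q ∈ Uq)
    (δ : ℝ) (hδ : 0 < δ)
    (hgp : ∀ z ∈ Up, δ < g z) (hgq : ∀ z ∈ Uq, g z < -δ)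
    (hinv : MapsTo φ Uq Uq)
    (N : ℕ) (hN : ∀ z, z ∉ Up → φ^[N] z ∈ Uq) :
    ∃ n₀ : ℕ, ∀ n ≥ n₀, ∀ z : Y,
      (∑ k ∈ Finset.range n, g (φ^[k] z)) = 0 → φ^[n] z ∈ Uq :=
  stmt_9_general φ g M hM Up Uq δ hδ hgp hinv N hN
end

section
/- Let φ be a contactomorphism of a compact contact manifold (Y, α) with the focal property for (p, q), and let gₙ be the scaling factor of the iterate φₙ. Then dist(Σₙ, p) + dist(φₙ(Σₙ), q) → 0 as n → ∞, where Σₙ = {z : gₙ(z) = 0}; i.e., Σₙ eventually enters every neighbourhood of p and φₙ(Σₙ) eventually enters every neighbourhood of q. -/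
open Function Filter Topology Metric
open scoped Manifold

/-- Pullback of a 1-form `α` on a manifold along a smooth map `φ`. -/
noncomputable def pullbackOneForm
    {E : Type*} [NormedAddCommGroup E] [NormedSpace ℝ E]
    {H : Type*} [TopologicalSpace H] (I : ModelWithCorners ℝ E H)
    {M : Type*} [TopologicalSpace M] [ChartedSpace H M]
    (φ : M → M) (α : ∀ x : M, TangentSpace I x →L[ℝ] ℝ) (x : M) :
    TangentSpace I x →L[ℝ] ℝ :=
  (α (φ x)).comp (mfderiv I I φ x)

/-- The focal property for `(p, q)` of a contactomorphism with scaling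
factor `g`. -/
def FocalProperty {M : Type*} [TopologicalSpace M]
    (φ : M → M) (g : M → ℝ) (p q : M) : Prop :=
  φ p = p ∧ φ q = q ∧ 0 < g p ∧ g q < 0 ∧
  (∀ U ∈ 𝓝 q, ∃ V ∈ 𝓝 q, IsOpen V ∧ V ⊆ U ∧ Set.MapsTo φ V V) ∧
  (∀ z, z ≠ p → Tendsto (fun k => φ^[k] z) atTop (𝓝 q))

/-!
Write `Sₙ = ∑_{k<n} g ∘ φᵏ` for the Birkhoff sum of `g`, so that `φₙ*α = exp(Sₙ) α` and
`Σₙ ⊇ {Sₙ = 0}`. Fix a connected neighbourhood `C` of `p` inside a neighbourhood `B` on which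
`g > g(p)/2`, and a point `y ≠ p` of `C` (points of a positive-dimensional manifold are not
isolated). Then `Sₙ p = n g(p) ≥ 0`, while `Sₙ y < 0` for large `n` because the orbit of `y`
converges to `q` and `g q < 0`; so `Sₙ` vanishes at some `z ∈ C`. The orbit of `z` cannot stay in
`B` up to time `n - N`, since then `Sₙ z ≥ (n - N) g(p)/2 + N min g > 0`; and by compactness of
`Bᶜ` every orbit leaving `B` enters a given `φ`-invariant neighbourhood of `q` within `N` steps.
Hence `φⁿ z` lies in that neighbourhood.
-/

open Set

section BirkhoffSum

variable {X : Type*} {f : X → X} {g : X → ℝ}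

lemma mul_le_birkhoffSum {c : ℝ} {n : ℕ} {x : X} (h : ∀ k < n, c ≤ g (f^[k] x)) :
    n * c ≤ birkhoffSum f g n x := by
  simpa [birkhoffSum] using
    Finset.card_nsmul_le_sum (Finset.range n) _ c fun k hk => h k (Finset.mem_range.1 hk)

lemma exists_iterate_notMem_of_birkhoffSum_nonpos {B : Set X} {m c : ℝ} {j N : ℕ} {z : X}
    (hm : ∀ x ∈ B, m ≤ g x) (hc : ∀ x, c ≤ g x) (hpos : 0 < j * m + N * c)
    (hz : birkhoffSum f g (j + N) z ≤ 0) : ∃ k < j, f^[k] z ∉ B := by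
  by_contra! hB
  have hstay : j * m ≤ birkhoffSum f g j z := mul_le_birkhoffSum fun k hk => hm _ (hB k hk)
  have hrest : N * c ≤ birkhoffSum f g N (f^[j] z) := mul_le_birkhoffSum fun k _ => hc _
  rw [birkhoffSum_add] at hz
  linarith

lemma eventually_birkhoffSum_neg {y : X} {a : ℝ} (h : Tendsto (fun k => g (f^[k] y)) atTop (𝓝 a))
    (ha : a < 0) : ∀ᶠ n in atTop, birkhoffSum f g n y < 0 := by
  filter_upwards [h.cesaro.eventually_lt_const ha] with n hn
  exact neg_of_mul_neg_right hn (inv_nonneg.2 n.cast_nonneg)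

lemma continuous_birkhoffSum [TopologicalSpace X] (hf : Continuous f) (hg : Continuous g) (n : ℕ) :
    Continuous (birkhoffSum f g n) :=
  continuous_finsetSum _ fun k _ => hg.comp (hf.iterate k)

lemma Set.MapsTo.iterate_mem_of_le_s10 {V : Set X} (hV : MapsTo f V V) {x : X} {i n : ℕ}
    (hi : f^[i] x ∈ V) (hin : i ≤ n) : f^[n] x ∈ V := by
  obtain ⟨d, rfl⟩ := Nat.exists_eq_add_of_le hin
  rw [add_comm, iterate_add_apply]
  exact hV.iterate d hi

lemma IsCompact.exists_forall_exists_iterate_mem [TopologicalSpace X] {K V : Set X}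
    (hK : IsCompact K) (hf : Continuous f) (hV : IsOpen V) (h : ∀ x ∈ K, ∃ k, f^[k] x ∈ V) :
    ∃ N, ∀ x ∈ K, ∃ k ≤ N, f^[k] x ∈ V := by
  obtain ⟨t, ht⟩ := hK.elim_finite_subcover (fun k => f^[k] ⁻¹' V)
    (fun k => hV.preimage (hf.iterate k)) fun x hx => mem_iUnion.2 (h x hx)
  refine ⟨t.sup id, fun x hx => ?_⟩
  obtain ⟨k, hkt, hk⟩ := mem_iUnion₂.1 (ht hx)
  exact ⟨k, Finset.le_sup (f := id) hkt, hk⟩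

theorem eventually_exists_birkhoffSum_eq_zero [TopologicalSpace X] [CompactSpace X]
    [LocallyConnectedSpace X] (hf : Continuous f) (hg : Continuous g) {p q : X} [(𝓝[≠] p).NeBot]
    (hp : IsFixedPt f p) (hgp : 0 < g p) (hgq : g q < 0)
    (hattr : ∀ z, z ≠ p → Tendsto (fun k => f^[k] z) atTop (𝓝 q))
    {U V : Set X} (hU : U ∈ 𝓝 p) (hV : IsOpen V) (hqV : q ∈ V) (hVf : MapsTo f V V) :
    ∀ᶠ n in atTop, ∃ z ∈ U, birkhoffSum f g n z = 0 ∧ f^[n] z ∈ V := by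
  obtain ⟨W, hWU, hWo, hpW⟩ := mem_nhds_iff.1 hU
  set B := W ∩ {x | g p / 2 < g x}
  have hBo : IsOpen B := hWo.inter (isOpen_lt continuous_const hg)
  have hpB : p ∈ B := ⟨hpW, half_lt_self hgp⟩
  obtain ⟨N, hN⟩ := hBo.isClosed_compl.isCompact.exists_forall_exists_iterate_mem hf hV
    fun x hx => ((hattr x fun h => hx (h ▸ hpB)).eventually (hV.mem_nhds hqV)).exists
  obtain ⟨c, hc⟩ := (isCompact_range hg).bddBelow
  obtain ⟨C, hCp, hCconn, hCB⟩ :=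
    locallyConnectedSpace_iff_connected_subsets.1 ‹_› p B (hBo.mem_nhds hpB)
  obtain ⟨y, hyp, hyC⟩ :=
    ((eventually_mem_nhdsWithin (s := {p}ᶜ)).and (mem_nhdsWithin_of_mem_nhds hCp)).exists
  have hlarge : ∀ᶠ j : ℕ in atTop, 0 < j * (g p / 2) + N * c :=
    (tendsto_atTop_add_const_right _ _
      (tendsto_natCast_atTop_atTop.atTop_mul_const (half_pos hgp))).eventually_gt_atTop 0
  filter_upwards [eventually_birkhoffSum_neg ((hg.tendsto q).comp (hattr y hyp)) hgq,
    (tendsto_sub_atTop_nat N).eventually hlarge, eventually_ge_atTop N] with n hyn hnpos hNn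
  obtain ⟨j, rfl⟩ := Nat.exists_eq_add_of_le' hNn
  rw [Nat.add_sub_cancel] at hnpos
  obtain ⟨z, hzC, hz⟩ := hCconn.intermediate_value hyC (mem_of_mem_nhds hCp)
    (continuous_birkhoffSum hf hg _).continuousOn
    ⟨hyn.le, by rw [hp.birkhoffSum_eq]; exact nsmul_nonneg hgp.le _⟩
  obtain ⟨k, hkj, hkB⟩ := exists_iterate_notMem_of_birkhoffSum_nonpos
    (fun x (hx : x ∈ B) => hx.2.le) (fun x => hc (mem_range_self x)) hnpos hz.le
  obtain ⟨i, hiN, hi⟩ := hN _ hkB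
  rw [← iterate_add_apply] at hi
  exact ⟨z, hWU (hCB hzC).1, hz, hVf.iterate_mem_of_le_s10 hi (by omega)⟩

end BirkhoffSum

section Manifold

variable {E : Type*} [NormedAddCommGroup E] [NormedSpace ℝ E]
  {H : Type*} [TopologicalSpace H] {I : ModelWithCorners ℝ E H}
  {M : Type*} [TopologicalSpace M] [ChartedSpace H M]

lemma pullbackOneForm_eq_of_subsingleton [Subsingleton E] (φ : M → M)
    (α : ∀ x : M, TangentSpace I x →L[ℝ] ℝ) (x : M) : pullbackOneForm I φ α x = α x :=
  haveI : Subsingleton (TangentSpace I x) := ‹Subsingleton E›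
  ContinuousLinearMap.ext fun v => by rw [Subsingleton.elim v 0, map_zero, map_zero]

lemma MDifferentiable.iterate {φ : M → M} (hφ : MDifferentiable I I φ) (n : ℕ) :
    MDifferentiable I I (φ^[n]) := by
  induction n with
  | zero => exact mdifferentiable_id
  | succ n ih => exact ih.comp hφ

lemma pullbackOneForm_iterate {α : ∀ x : M, TangentSpace I x →L[ℝ] ℝ} {φ : M → M} {g : M → ℝ}
    (hφ : MDifferentiable I I φ) (hscal : ∀ x, pullbackOneForm I φ α x = Real.exp (g x) • α x)
    (n : ℕ) (x : M) :
    pullbackOneForm I (φ^[n]) α x = Real.exp (birkhoffSum φ g n x) • α x := by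
  induction n generalizing x with
  | zero =>
    simp only [iterate_zero, birkhoffSum_zero, Real.exp_zero, one_smul, pullbackOneForm]
    rw [id, mfderiv_id]
    exact ContinuousLinearMap.comp_id _
  | succ n ih =>
    have hcomp : pullbackOneForm I (φ^[n] ∘ φ) α x
        = (pullbackOneForm I (φ^[n]) α (φ x)).comp (mfderiv I I φ x) := by
      rw [pullbackOneForm, pullbackOneForm,
        mfderiv_comp x ((hφ.iterate n) (φ x)) (hφ x), ← ContinuousLinearMap.comp_assoc]
      rfl
    rw [iterate_succ, hcomp, ih, ContinuousLinearMap.smul_comp]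
    change _ • pullbackOneForm I φ α x = _
    rw [hscal x, smul_smul, ← Real.exp_add, birkhoffSum_succ', add_comm]

end Manifold

section ModelSpace

variable {E : Type*} [NormedAddCommGroup E] [NormedSpace ℝ E]
  {H : Type*} [TopologicalSpace H]

lemma ModelWithCorners.nontrivial_range (I : ModelWithCorners ℝ E H) [Nontrivial E] :
    (range I).Nontrivial := by
  obtain ⟨x, hx⟩ := I.nonempty_interior
  obtain ⟨y, hyx, hy⟩ := ((eventually_mem_nhdsWithin (s := {x}ᶜ)).and
    (mem_nhdsWithin_of_mem_nhds (isOpen_interior.mem_nhds hx))).exists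
  exact ⟨x, interior_subset hx, y, interior_subset hy, Ne.symm hyx⟩

lemma ModelWithCorners.perfectSpace (I : ModelWithCorners ℝ E H) [Nontrivial E] :
    PerfectSpace H := by
  let e : H ≃ₜ range I := I.isClosedEmbedding.isEmbedding.toHomeomorph
  have : ConnectedSpace H := e.connectedSpace_iff.2 <|
    isConnected_iff_connectedSpace.1 (I.convex_range.isConnected I.nontrivial_range.nonempty)
  have : Nontrivial H := by
    obtain ⟨_, ⟨a, rfl⟩, _, ⟨b, rfl⟩, hab⟩ := I.nontrivial_range
    exact ⟨a, b, fun h => hab (congrArg I h)⟩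
  have : T1Space H := I.isClosedEmbedding.isEmbedding.t1Space
  infer_instance

lemma ModelWithCorners.locallyConnectedSpace (I : ModelWithCorners ℝ E H) :
    LocallyConnectedSpace H :=
  have := I.convex_range.locallyPathConnectedSpace
  I.isClosedEmbedding.isEmbedding.toHomeomorph.locallyConnectedSpace

end ModelSpace

lemma ChartedSpace.nhdsNE_neBot {H : Type*} [TopologicalSpace H] [PerfectSpace H]
    {M : Type*} [TopologicalSpace M] [ChartedSpace H M] (x : M) : (𝓝[≠] x).NeBot := by
  rw [neBot_iff, Ne, ← isOpen_singleton_iff_punctured_nhds]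
  intro hx
  apply not_isOpen_singleton (chartAt H x x)
  simpa using (chartAt H x).isOpen_image_of_subset_source hx
    (singleton_subset_iff.2 (mem_chart_source H x))

lemma tendsto_infDist_zero_of_forall_mem_nhds {ι X : Type*} [PseudoMetricSpace X]
    {l : Filter ι} {x : X} {s : ι → Set X} (h : ∀ U ∈ 𝓝 x, ∀ᶠ i in l, (s i ∩ U).Nonempty) :
    Tendsto (fun i => infDist x (s i)) l (𝓝 0) := by
  refine Metric.tendsto_nhds.2 fun ε hε => ?_
  filter_upwards [h _ (ball_mem_nhds x hε)] with i ⟨z, hzs, hz⟩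
  rw [Real.dist_0_eq_abs, abs_of_nonneg infDist_nonneg]
  exact (infDist_le_dist_of_mem hzs).trans_lt (mem_ball'.1 hz)

lemma tendsto_infDist_add_infDist_image_of_forall_mem_nhds {ι X : Type*} [PseudoMetricSpace X]
    {l : Filter ι} {x y : X} {s : ι → Set X} {F : ι → X → X}
    (h : ∀ U ∈ 𝓝 x, ∀ W ∈ 𝓝 y, ∀ᶠ i in l, ∃ z ∈ s i, z ∈ U ∧ F i z ∈ W) :
    Tendsto (fun i => infDist x (s i) + infDist y (F i '' s i)) l (𝓝 0) := by
  rw [← add_zero (0 : ℝ)]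
  refine (tendsto_infDist_zero_of_forall_mem_nhds fun U hU => ?_).add
    (tendsto_infDist_zero_of_forall_mem_nhds fun W hW => ?_)
  · filter_upwards [h U hU univ univ_mem] with i ⟨z, hzs, hzU, _⟩ using ⟨z, hzs, hzU⟩
  · filter_upwards [h univ univ_mem W hW] with i ⟨z, hzs, _, hzW⟩ using
      ⟨F i z, mem_image_of_mem _ hzs, hzW⟩

theorem stmt_10_general
    {E : Type*} [NormedAddCommGroup E] [NormedSpace ℝ E]
    {H : Type*} [TopologicalSpace H] (I : ModelWithCorners ℝ E H)
    {M : Type*} [MetricSpace M] [ChartedSpace H M]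
    [CompactSpace M]
    (α : ∀ x : M, TangentSpace I x →L[ℝ] ℝ)
    (φ : M → M) (hφ : ContMDiff I I (⊤ : ℕ∞) φ)
    (g : M → ℝ) (hg : ContMDiff I 𝓘(ℝ, ℝ) (⊤ : ℕ∞) g)
    (hscal : ∀ x, pullbackOneForm I φ α x = Real.exp (g x) • α x)
    (p q : M) (hfocal : FocalProperty φ g p q) :
    Tendsto (fun n : ℕ =>
        infDist p {z | pullbackOneForm I (φ^[n]) α z = α z} +
        infDist q ((φ^[n]) '' {z | pullbackOneForm I (φ^[n]) α z = α z}))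
      atTop (𝓝 0) := by
  obtain ⟨hp, hq, hgp, hgq, hinv, hattr⟩ := hfocal
  rcases subsingleton_or_nontrivial E with hE | hE
  · have huniv (n : ℕ) : {z | pullbackOneForm I (φ^[n]) α z = α z} = univ :=
      eq_univ_of_forall (pullbackOneForm_eq_of_subsingleton _ α)
    have hzero (n : ℕ) : infDist p {z | pullbackOneForm I (φ^[n]) α z = α z} +
        infDist q ((φ^[n]) '' {z | pullbackOneForm I (φ^[n]) α z = α z}) = 0 := by
      rw [huniv, image_univ, infDist_zero_of_mem (mem_univ p),
        infDist_zero_of_mem (mem_range.2 ⟨q, iterate_fixed hq n⟩), add_zero]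
    simp only [hzero, tendsto_const_nhds]
  · have := I.perfectSpace
    have := I.locallyConnectedSpace
    have := ChartedSpace.locallyConnectedSpace H M
    have := ChartedSpace.nhdsNE_neBot (H := H) p
    refine tendsto_infDist_add_infDist_image_of_forall_mem_nhds fun U hU W hW => ?_
    obtain ⟨V, hV, hVo, hVW, hVφ⟩ := hinv W hW
    filter_upwards [eventually_exists_birkhoffSum_eq_zero hφ.continuous hg.continuous hp hgp hgq
      hattr hU hVo (mem_of_mem_nhds hV) hVφ] with n ⟨z, hzU, hz, hzV⟩
    refine ⟨z, ?_, hzU, hVW hzV⟩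
    rw [pullbackOneForm_iterate (hφ.mdifferentiable (by simp)) hscal, hz,
      Real.exp_zero, one_smul]

/-- If a contactomorphism `φ` of a compact contact manifold has the focal
property for `(p, q)` and `Σₙ = {z : (φₙ*α)_z = α_z}` (the vanishing locus of
the scaling factor of the iterate `φₙ`), then
`dist(Σₙ, p) + dist(φₙ(Σₙ), q) → 0` as `n → ∞`. -/
theorem stmt_10
    {E : Type*} [NormedAddCommGroup E] [NormedSpace ℝ E]
    {H : Type*} [TopologicalSpace H] (I : ModelWithCorners ℝ E H)
    {M : Type*} [MetricSpace M] [ChartedSpace H M]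
    [IsManifold I (⊤ : ℕ∞) M] [CompactSpace M]
    (α : ∀ x : M, TangentSpace I x →L[ℝ] ℝ)
    (φ : M → M) (hφ : ContMDiff I I (⊤ : ℕ∞) φ)
    (g : M → ℝ) (hg : ContMDiff I 𝓘(ℝ, ℝ) (⊤ : ℕ∞) g)
    (hscal : ∀ x, pullbackOneForm I φ α x = Real.exp (g x) • α x)
    (p q : M) (hfocal : FocalProperty φ g p q) :
    Tendsto (fun n : ℕ =>
        infDist p {z | pullbackOneForm I (φ^[n]) α z = α z} +
        infDist q ((φ^[n]) '' {z | pullbackOneForm I (φ^[n]) α z = α z}))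
      atTop (𝓝 0) :=
  stmt_10_general I α φ hφ g hg hscal p q hfocal
end

section
/- If φ has the focal property for (p, q) on Y compact, then φ⁻¹ has the focal property for (q, p). -/
/-!
Let `V` be a `φ`-invariant open neighbourhood of `q` and `W` an open neighbourhood of `p`.
Every point outside `W` eventually enters `V`, and the open sets `φ⁻ⁿ(V)` increase with `n`,
so by compactness a single `N` works for all of `(W ∪ V)ᶜ`. Reading this backwards,
`φ⁻ᵏ` maps `Vᶜ` into `W` for every `k ≥ N`: backward orbits starting off `V` converge to `p`,
and every `z ≠ q` lies off some such `V` because manifolds are T1.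
Since `g < 0` near `q` and `g p > 0`, `V` can be chosen with `p ∉ closure V`; the complement
of `closure V` is `φ⁻¹`-invariant, and cutting it down by the first `N` preimages of `W`
gives a `φ⁻¹`-invariant neighbourhood of `p` inside `W`.
-/

open Function Filter Topology
open scoped Manifold

open Set

section Dynamics

variable {X : Type*} {φ ψ : X → X} {s V W : Set X}

theorem Set.MapsTo.compl_of_rightInverse (hψ : RightInverse ψ φ) (h : MapsTo φ s s) :
    MapsTo ψ sᶜ sᶜ :=
  fun x hx hψx => hx (hψ x ▸ h hψx)

theorem Set.MapsTo.monotone_preimage_iterate (h : MapsTo φ V V) :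
    Monotone fun n => φ^[n] ⁻¹' V :=
  monotone_nat_of_le_succ fun n _ hx => by
    simpa only [mem_preimage, iterate_succ_apply'] using h hx

variable [TopologicalSpace X]

theorem IsCompact.exists_mapsTo_iterate {K : Set X} (hK : IsCompact K) (hφ : Continuous φ)
    (hV : IsOpen V) (hφV : MapsTo φ V V) (hKV : ∀ x ∈ K, ∃ n, φ^[n] x ∈ V) :
    ∃ N, ∀ n ≥ N, MapsTo (φ^[n]) K V := by
  obtain ⟨N, hN⟩ := hK.elim_directed_cover (fun n => φ^[n] ⁻¹' V)
    (fun n => hV.preimage (hφ.iterate n)) (fun x hx => mem_iUnion.2 (hKV x hx))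
    hφV.monotone_preimage_iterate.directed_le
  exact ⟨N, fun n hn => hN.trans (hφV.monotone_preimage_iterate hn)⟩

theorem eventually_mapsTo_iterate_compl_of_rightInverse [CompactSpace X] (hφ : Continuous φ)
    (hψ : RightInverse ψ φ) (hV : IsOpen V) (hφV : MapsTo φ V V) (hW : IsOpen W)
    (hattr : ∀ x ∉ W, ∃ n, φ^[n] x ∈ V) :
    ∀ᶠ k in atTop, MapsTo (ψ^[k]) Vᶜ W := by
  obtain ⟨N, hN⟩ := (hW.union hV).isClosed_compl.isCompact.exists_mapsTo_iterate hφ hV hφV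
    fun x hx => hattr x fun h => hx (Or.inl h)
  refine eventually_atTop.2 ⟨N, fun k hk z hz => ?_⟩
  by_contra hzW
  have hzV : ψ^[k] z ∉ V := (hφV.iterate k).compl_of_rightInverse (hψ.iterate k) hz
  exact hz (hψ.iterate k z ▸ hN k hk (not_or.2 ⟨hzW, hzV⟩))

theorem exists_isOpen_mapsTo_subset_of_eventually_mapsTo_iterate {p : X} {S : Set X}
    (hψ : Continuous ψ) (hp : ψ p = p) (hS : IsOpen S) (hpS : p ∈ S) (hψS : MapsTo ψ S S)
    (hW : IsOpen W) (hpW : p ∈ W) (hSW : ∀ᶠ k in atTop, MapsTo (ψ^[k]) S W) :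
    ∃ O ∈ 𝓝 p, IsOpen O ∧ O ⊆ W ∧ MapsTo ψ O O := by
  obtain ⟨N, hN⟩ := eventually_atTop.1 hSW
  set O := S ∩ ⋂ k ∈ Finset.range (N + 1), ψ^[k] ⁻¹' W
  have hO : IsOpen O := hS.inter (isOpen_biInter_finset fun k _ => hW.preimage (hψ.iterate k))
  refine ⟨O, hO.mem_nhds ⟨hpS, ?_⟩, hO, fun x hx => ?_, fun x hx => ⟨hψS hx.1, ?_⟩⟩
  · exact mem_iInter₂.2 fun k _ => by rwa [mem_preimage, iterate_fixed hp]
  · simpa using mem_iInter₂.1 hx.2 0 (by simp)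
  · refine mem_iInter₂.2 fun k _ => ?_
    rw [mem_preimage, ← iterate_succ_apply]
    rcases lt_or_ge (k + 1) (N + 1) with hlt | hge
    · exact mem_iInter₂.1 hx.2 (k + 1) (Finset.mem_range.2 hlt)
    · exact hN (k + 1) (by omega) hx.1

end Dynamics

theorem stmt_11_general
    {E : Type*} [NormedAddCommGroup E] [NormedSpace ℝ E]
    {H : Type*} [TopologicalSpace H] (I : ModelWithCorners ℝ E H)
    {M : Type*} [TopologicalSpace M] [ChartedSpace H M]
    [CompactSpace M]
    (φ φinv : M → M) (hφ : ContMDiff I I (⊤ : ℕ∞) φ) (hφinv : ContMDiff I I (⊤ : ℕ∞) φinv)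
    (hleft : LeftInverse φinv φ) (hright : RightInverse φinv φ)
    (g : M → ℝ) (hg : ContMDiff I 𝓘(ℝ, ℝ) (⊤ : ℕ∞) g)
    (p q : M) (hfocal : FocalProperty φ g p q) :
    FocalProperty φinv (fun y => -g (φinv y)) q p := by
  obtain ⟨hp, hq, hgp, hgq, hbasis, horb⟩ := hfocal
  have : T1Space M := I.t1Space M
  have hp' : φinv p = p := by simpa [hp] using hleft p
  have hq' : φinv q = q := by simpa [hq] using hleft q
  have hback : ∀ V W, IsOpen V → q ∈ V → MapsTo φ V V → IsOpen W → p ∈ W →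
      ∀ᶠ k in atTop, MapsTo (φinv^[k]) Vᶜ W := fun V W hV hqV hφV hW hpW =>
    eventually_mapsTo_iterate_compl_of_rightInverse hφ.continuous hright hV hφV hW fun x hx =>
      ((horb x fun h => hx (h ▸ hpW)).eventually (hV.mem_nhds hqV)).exists
  refine ⟨hq', hp', by simpa [hq'] using hgq, by simpa [hp'] using hgp, fun U hU => ?_,
    fun z hz => tendsto_nhds.2 fun W hW hpW => ?_⟩
  · obtain ⟨V, hVq, hV, hVg, hφV⟩ :=
      hbasis _ ((isOpen_Iio.preimage hg.continuous).mem_nhds (mem_preimage.2 hgq))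
    have hpV : p ∉ closure V := fun h =>
      (closure_minimal (hVg.trans (preimage_mono Iio_subset_Iic_self))
        (isClosed_Iic.preimage hg.continuous) h).not_gt hgp
    obtain ⟨O, hOp, hO, hOU, hφinvO⟩ :=
      exists_isOpen_mapsTo_subset_of_eventually_mapsTo_iterate hφinv.continuous hp'
        isClosed_closure.isOpen_compl hpV
        ((hφV.closure hφ.continuous).compl_of_rightInverse hright) isOpen_interior
        (mem_interior_iff_mem_nhds.2 hU)
        ((hback V _ hV (mem_of_mem_nhds hVq) hφV isOpen_interior
          (mem_interior_iff_mem_nhds.2 hU)).mono fun k hk =>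
            hk.mono_left (compl_subset_compl.2 subset_closure))
    exact ⟨O, hOp, hO, hOU.trans interior_subset, hφinvO⟩
  · obtain ⟨V, hVq, hV, hVz, hφV⟩ := hbasis _ (isOpen_compl_singleton.mem_nhds hz.symm)
    exact (hback V W hV (mem_of_mem_nhds hVq) hφV hW hpW).mono fun k hk => hk fun h => hVz h rfl

/-- If a contactomorphism `φ` of a compact contact manifold has the focal
property for `(p, q)`, then its inverse `φ⁻¹` (whose scaling factor is
`−g ∘ φ⁻¹`) has the focal property for `(q, p)`. -/
theorem stmt_11
    {E : Type*} [NormedAddCommGroup E] [NormedSpace ℝ E]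
    {H : Type*} [TopologicalSpace H] (I : ModelWithCorners ℝ E H)
    {M : Type*} [TopologicalSpace M] [ChartedSpace H M]
    [IsManifold I (⊤ : ℕ∞) M] [CompactSpace M]
    (α : ∀ x : M, TangentSpace I x →L[ℝ] ℝ)
    (φ φinv : M → M) (hφ : ContMDiff I I (⊤ : ℕ∞) φ) (hφinv : ContMDiff I I (⊤ : ℕ∞) φinv)
    (hleft : LeftInverse φinv φ) (hright : RightInverse φinv φ)
    (g : M → ℝ) (hg : ContMDiff I 𝓘(ℝ, ℝ) (⊤ : ℕ∞) g)
    (hscal : ∀ x, pullbackOneForm I φ α x = Real.exp (g x) • α x)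
    (p q : M) (hfocal : FocalProperty φ g p q) :
    FocalProperty φinv (fun y => -g (φinv y)) q p :=
  stmt_11_general I φ φinv hφ hφinv hleft hright g hg p q hfocal
end

section
/- If φ: S^(2n−1) → S^(2n−1) is a contactomorphism of the standard contact sphere having the focal property for (p, q) where q does not lie on the Hopf circle through p, then some iterate φₙ of φ has no translated points. -/
open Filter Topology Set Metric


lemma hopf_dist {E : Type*} [NormedAddCommGroup E] [NormedSpace ℂ E] (p q : E)
    (hHopf : ∀ t : ℝ, Complex.exp (t * Complex.I) • p ≠ q) :
    ∃ d > 0, ∀ t : ℝ, d ≤ dist p (Complex.exp (t * Complex.I) • q) := by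
  set f : ℝ → E := fun t => Complex.exp (t * Complex.I) • q with hf
  have hfc : Continuous f := by
    exact (Complex.continuous_exp.comp (Complex.continuous_ofReal.mul continuous_const)).smul
      continuous_const
  have hper : Function.Periodic f (2 * Real.pi) := by
    intro t
    simp only [hf]
    congr 1
    push_cast
    rw [add_mul, Complex.exp_add, Complex.exp_two_pi_mul_I, mul_one]
  have h2π : (0:ℝ) < 2 * Real.pi := by positivity
  set Kq : Set E := f '' Icc 0 (2 * Real.pi) with hKq
  have hKc : IsCompact Kq := isCompact_Icc.image hfc
  have hKne : Kq.Nonempty := (nonempty_Icc.2 h2π.le).image f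
  have hpn : p ∉ Kq := by
    rintro ⟨t, -, ht⟩
    apply hHopf (-t)
    have : Complex.exp (-(t:ℂ) * Complex.I) • (Complex.exp ((t:ℂ) * Complex.I) • q)
        = (1:ℂ) • q := by
      rw [smul_smul, ← Complex.exp_add]
      ring_nf
      simp
    push_cast
    rw [← ht]
    simpa using this
  have hd : 0 < infDist p Kq := (hKc.isClosed.notMem_iff_infDist_pos hKne).1 hpn
  refine ⟨infDist p Kq, hd, fun t => ?_⟩
  have hmem : f t ∈ Kq := by
    set s : ℝ := t - (⌊t / (2 * Real.pi)⌋ : ℤ) * (2 * Real.pi) with hs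
    have hfs : f s = f t := hper.sub_int_mul_eq _
    have hsf : s = Int.fract (t / (2 * Real.pi)) * (2 * Real.pi) := by
      rw [Int.fract]
      field_simp [hs]
      ring
    have h0 : 0 ≤ s := by
      rw [hsf]; exact mul_nonneg (Int.fract_nonneg _) h2π.le
    have h1 : s ≤ 2 * Real.pi := by
      rw [hsf]
      nlinarith [Int.fract_lt_one (t / (2 * Real.pi))]
    exact ⟨s, ⟨h0, h1⟩, hfs⟩
  exact infDist_le_dist_of_mem hmem

lemma orbit_mem {E : Type*} {φ : E → E} {S : Set E} (hφS : MapsTo φ S S) {z : E}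
    (hz : z ∈ S) : ∀ k, φ^[k] z ∈ S := by
  intro k
  induction k with
  | zero => simpa using hz
  | succ k ih => rw [Function.iterate_succ_apply']; exact hφS ih

lemma inv_orbit {E : Type*} {φ : E → E} {V : Set E} (hV : MapsTo φ V V) {x : E}
    (hx : x ∈ V) : ∀ k, φ^[k] x ∈ V := by
  intro k
  induction k with
  | zero => simpa using hx
  | succ k ih => rw [Function.iterate_succ_apply']; exact hV ih

lemma uniform_attract {E : Type*} [MetricSpace E] {φ : E → E} {S V : Set E}
    (hφc : Continuous φ) {q : E} (hV : V ∈ 𝓝[S] q) (hVinv : MapsTo φ V V)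
    {K : Set E} (hK : IsCompact K) (hKS : K ⊆ S)
    (hSinv : MapsTo φ S S)
    (hconv : ∀ z ∈ K, Tendsto (fun k => φ^[k] z) atTop (𝓝 q)) :
    ∃ N : ℕ, ∀ z ∈ K, ∀ j, N ≤ j → φ^[j] z ∈ V := by
  obtain ⟨O, hOopen, hqO, hOV⟩ := mem_nhdsWithin.1 hV
  have key : ∀ z : K, ∃ nz : ℕ, φ^[nz] (z : E) ∈ O := by
    intro z
    exact ((hconv z z.2).eventually_mem (hOopen.mem_nhds hqO)).exists
  choose nz hnz using key
  have hcover : K ⊆ ⋃ z : K, (φ^[nz z]) ⁻¹' O := by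
    intro x hx
    exact mem_iUnion.2 ⟨⟨x, hx⟩, hnz ⟨x, hx⟩⟩
  obtain ⟨t, ht⟩ := hK.elim_finite_subcover _
    (fun z : K => (hOopen.preimage (hφc.iterate (nz z)))) hcover
  refine ⟨t.sup nz, fun z hz j hj => ?_⟩
  obtain ⟨i, hit, hiO⟩ := Set.mem_iUnion₂.1 (ht hz)
  have hin : φ^[nz i] z ∈ V := hOV ⟨hiO, orbit_mem hSinv (hKS hz) _⟩
  have hle : nz i ≤ j := le_trans (Finset.le_sup hit) hj
  have : φ^[j - nz i] (φ^[nz i] z) = φ^[j] z := by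
    rw [← Function.iterate_add_apply, Nat.sub_add_cancel hle]
  rw [← this]
  exact inv_orbit hVinv hin _
set_option maxHeartbeats 1000000 in
/-- If a contactomorphism `φ` of the standard contact sphere
`S^{2n-1} ⊂ ℂⁿ` has the focal property for a pair `(p,q)` with `q` not on the
Hopf circle through `p`, then some iterate of `φ` has no translated points.
Here `α_std` at `z` is `v ↦ Im⟪z,v⟫`, the scaling factor `g` of `φ` satisfies
`(φ*α)_z = e^{g(z)} α_z` on tangent vectors, the scaling factor of the iterate
`φₙ` is `gₙ = Σ_{k<n} g∘φᵏ`, the Reeb orbits are the Hopf circles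
`t ↦ e^{it}z`, and a translated point of `φₙ` is a point `z` with `gₙ(z) = 0`
and `φₙ(z) = e^{it}z` for some `t`. -/
theorem stmt_12 {n : ℕ}
    (S : Set (EuclideanSpace ℂ (Fin n)))
    (hS : S = sphere (0 : EuclideanSpace ℂ (Fin n)) 1)
    (φ : EuclideanSpace ℂ (Fin n) → EuclideanSpace ℂ (Fin n))
    (hφS : MapsTo φ S S) (hφc : ContDiff ℝ (⊤ : ℕ∞) φ)
    (g : EuclideanSpace ℂ (Fin n) → ℝ) (hg : Continuous g)
    -- φ*α_std = e^g α_std on the sphere: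
    (hscal : ∀ z ∈ S, ∀ v : EuclideanSpace ℂ (Fin n), (inner ℂ z v : ℂ).re = 0 →
      (inner ℂ (φ z) (fderiv ℝ φ z v) : ℂ).im = Real.exp (g z) * (inner ℂ z v : ℂ).im)
    (p q : EuclideanSpace ℂ (Fin n)) (hp : p ∈ S) (hq : q ∈ S)
    -- the focal property for (p, q):
    (hfixp : φ p = p) (hfixq : φ q = q) (hgp : 0 < g p) (hgq : g q < 0)
    (hattr : ∀ U ∈ 𝓝[S] q, ∃ V ∈ 𝓝[S] q, V ⊆ U ∧ MapsTo φ V V)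
    (hconv : ∀ z ∈ S, z ≠ p → Tendsto (fun k => φ^[k] z) atTop (𝓝 q))
    -- q is not on the Hopf circle through p:
    (hHopf : ∀ t : ℝ, Complex.exp (t * Complex.I) • p ≠ q) :
    ∃ m : ℕ, 1 ≤ m ∧ ∀ z ∈ S,
      ¬ ((∑ k ∈ Finset.range m, g (φ^[k] z)) = 0 ∧
         ∃ t : ℝ, φ^[m] z = Complex.exp (t * Complex.I) • z) := by
  classical
  have hScomp : IsCompact S := by rw [hS]; exact isCompact_sphere 0 1
  have hSclosed : IsClosed S := by rw [hS]; exact isClosed_sphere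
  obtain ⟨C, hC⟩ := hScomp.exists_bound_of_continuousOn hg.continuousOn
  have hC0 : 0 ≤ C := le_trans (norm_nonneg _) (hC p hp)
  set a : ℝ := g p / 2 with ha
  set b : ℝ := g q / 2 with hb
  have hapos : 0 < a := half_pos hgp
  have hbneg : b < 0 := by simp only [hb]; linarith
  obtain ⟨ε₁, hε₁pos, hε₁⟩ := continuousAt_iff.1 hg.continuousAt a hapos
  obtain ⟨δ₁, hδ₁pos, hδ₁⟩ := continuousAt_iff.1 hg.continuousAt (-b) (by linarith)
  have hga : ∀ x, dist x p < ε₁ → a ≤ g x := by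
    intro x hx
    have h := hε₁ hx
    rw [Real.dist_eq] at h
    have h' := abs_lt.1 h
    simp only [ha] at *
    linarith [h'.1]
  have hgb : ∀ x, dist x q < δ₁ → g x ≤ b := by
    intro x hx
    have h := hδ₁ hx
    rw [Real.dist_eq] at h
    have h' := abs_lt.1 h
    simp only [hb] at *
    linarith [h'.2]
  obtain ⟨d, hdpos, hd⟩ := hopf_dist p q hHopf
  set ε : ℝ := min ε₁ (d/4) with hε
  set δ : ℝ := min δ₁ (d/4) with hδ
  have hεpos : 0 < ε := lt_min hε₁pos (by linarith)
  have hδpos : 0 < δ := lt_min hδ₁pos (by linarith)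
  obtain ⟨V, hVmem, hVball, hVinv⟩ :=
    hattr (ball q δ) (mem_nhdsWithin_of_mem_nhds (ball_mem_nhds q hδpos))
  set K : Set (EuclideanSpace ℂ (Fin n)) := S \ ball p ε with hK
  have hKcomp : IsCompact K := hScomp.of_isClosed_subset (hSclosed.sdiff isOpen_ball) diff_subset
  have hconvK : ∀ z ∈ K, Tendsto (fun k => φ^[k] z) atTop (𝓝 q) := by
    intro z hz
    exact hconv z hz.1 (fun h => hz.2 (h ▸ mem_ball_self hεpos))
  obtain ⟨N, hN⟩ := uniform_attract hφc.continuous hVmem hVinv hKcomp diff_subset hφS hconvK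
  obtain ⟨m, hm⟩ := exists_nat_gt ((N:ℝ) + N*C/a + N*C/(-b) + 1)
  have haux1 : 0 ≤ (N:ℝ)*C/a := div_nonneg (mul_nonneg (Nat.cast_nonneg _) hC0) hapos.le
  have haux2 : 0 ≤ (N:ℝ)*C/(-b) := div_nonneg (mul_nonneg (Nat.cast_nonneg _) hC0) (by linarith)
  have hNmR : (N:ℝ) < m := by linarith
  have hNm' : N ≤ m := by exact_mod_cast hNmR.le
  have h1m : 1 ≤ m := by
    have : (1:ℝ) ≤ m := by linarith [Nat.cast_nonneg (α := ℝ) N]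
    exact_mod_cast this
  have hma : (N:ℝ)*C < ((m:ℝ) - N)*a := by
    have h : (N:ℝ)*C/a < (m:ℝ) - N := by linarith
    exact (div_lt_iff₀ hapos).1 h
  have hmb : (N:ℝ)*C + ((m:ℝ) - N)*b < 0 := by
    have h : (N:ℝ)*C/(-b) < (m:ℝ) - N := by linarith
    have h2 := (div_lt_iff₀ (by linarith : (0:ℝ) < -b)).1 h
    nlinarith
  refine ⟨m, h1m, ?_⟩
  rintro z hz ⟨hsum, t, hrot⟩
  have hxS : ∀ k, φ^[k] z ∈ S := orbit_mem hφS hz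
  by_cases hall : ∀ k < m, φ^[k] z ∈ ball p ε
  · have hlow : (m:ℝ) * a ≤ ∑ k ∈ Finset.range m, g (φ^[k] z) := by
      have := Finset.card_nsmul_le_sum (Finset.range m) (fun k => g (φ^[k] z)) a
        (fun k hk => hga _ (lt_of_lt_of_le (mem_ball.mp (hall k (Finset.mem_range.1 hk)))
          (min_le_left _ _)))
      simpa [nsmul_eq_mul] using this
    rw [hsum] at hlow
    have hmpos : (0:ℝ) < m := by exact_mod_cast h1m
    nlinarith
  · push_neg at hall
    obtain ⟨k₀, hk₀m, hk₀⟩ := hall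
    have hex : ∃ k, φ^[k] z ∉ ball p ε := ⟨k₀, hk₀⟩
    set T := Nat.find hex with hTdef
    have hTspec : φ^[T] z ∉ ball p ε := Nat.find_spec hex
    have hTmin : ∀ k < T, φ^[k] z ∈ ball p ε := fun k hk => not_not.1 (Nat.find_min hex hk)
    have hTm : T < m := lt_of_le_of_lt (Nat.find_le hk₀) hk₀m
    have htail : ∀ k, T + N ≤ k → φ^[k] z ∈ ball q δ := by
      intro k hk
      have h1 : φ^[k - T] (φ^[T] z) = φ^[k] z := by
        rw [← Function.iterate_add_apply, Nat.sub_add_cancel (by omega)]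
      have h2 : N ≤ k - T := by omega
      have h3 := hN (φ^[T] z) ⟨hxS T, hTspec⟩ (k - T) h2
      rw [h1] at h3
      exact hVball h3
    by_cases hcase : T + N ≤ m
    · rcases Nat.eq_zero_or_pos T with hT0 | hT1
      · -- T = 0 : sum is eventually strongly negative
        have hNm2 : N ≤ m := by omega
        have hsplit := Finset.sum_range_add_sum_Ico (fun k => g (φ^[k] z)) hNm2
        have hup1 : ∑ k ∈ Finset.range N, g (φ^[k] z) ≤ (N:ℝ) * C := by
          have := Finset.sum_le_card_nsmul (Finset.range N) (fun k => g (φ^[k] z)) C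
            (fun k _ => le_trans (le_abs_self _)
              (by simpa [Real.norm_eq_abs] using hC _ (hxS k)))
          simpa [nsmul_eq_mul] using this
        have hup2 : ∑ k ∈ Finset.Ico N m, g (φ^[k] z) ≤ ((m - N : ℕ):ℝ) * b := by
          have := Finset.sum_le_card_nsmul (Finset.Ico N m) (fun k => g (φ^[k] z)) b
            (fun k hk => by
              have hk' := Finset.mem_Ico.1 hk
              have hb2 : φ^[k] z ∈ ball q δ := htail k (by omega)
              exact hgb _ (lt_of_lt_of_le (mem_ball.mp hb2) (min_le_left _ _)))
          simpa [Nat.card_Ico, nsmul_eq_mul] using this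
        have hcast : ((m - N : ℕ):ℝ) = (m:ℝ) - N := by
          rw [Nat.cast_sub hNm2]
        rw [← hsplit] at hsum
        rw [hcast] at hup2
        linarith
      · -- T ≥ 1 : geometric contradiction with the Hopf circle of q
        have hz0 : z ∈ ball p ε := by
          have := hTmin 0 hT1
          simpa using this
        have hxm : φ^[m] z ∈ ball q δ := htail m (by omega)
        rw [hrot] at hxm
        have hxm' : dist (Complex.exp ((t:ℂ) * Complex.I) • z) q < δ := mem_ball.mp hxm
        have key : Complex.exp ((t:ℂ) * Complex.I) • (Complex.exp (-(t:ℂ) * Complex.I) • q)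
            = q := by
          have h0 : (t:ℂ)*Complex.I + -(t:ℂ)*Complex.I = 0 := by ring
          rw [smul_smul, ← Complex.exp_add, h0, Complex.exp_zero, one_smul]
        have hdistz : dist z (Complex.exp (-(t:ℂ) * Complex.I) • q) < δ := by
          have heq : dist z (Complex.exp (-(t:ℂ)*Complex.I) • q)
              = dist (Complex.exp ((t:ℂ)*Complex.I) • z)
                  (Complex.exp ((t:ℂ)*Complex.I) • (Complex.exp (-(t:ℂ)*Complex.I) • q)) := by
            rw [dist_smul₀, Complex.norm_exp_ofReal_mul_I, one_mul]
          rw [heq, key]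
          exact hxm'
        have hd' := hd (-t)
        push_cast at hd'
        have htri : dist p (Complex.exp (-(t:ℂ)*Complex.I) • q)
            ≤ dist p z + dist z (Complex.exp (-(t:ℂ)*Complex.I) • q) := dist_triangle _ _ _
        have hpz : dist p z < ε := by rw [dist_comm]; exact mem_ball.mp hz0
        have hε4 : ε ≤ d/4 := min_le_right _ _
        have hδ4 : δ ≤ d/4 := min_le_right _ _
        linarith
    · -- m < T + N : sum is strongly positive
      push_neg at hcase
      have hsplit := Finset.sum_range_add_sum_Ico (fun k => g (φ^[k] z)) hTm.le
      have hlow1 : (T:ℝ) * a ≤ ∑ k ∈ Finset.range T, g (φ^[k] z) := by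
        have := Finset.card_nsmul_le_sum (Finset.range T) (fun k => g (φ^[k] z)) a
          (fun k hk => hga _ (lt_of_lt_of_le (mem_ball.mp (hTmin k (Finset.mem_range.1 hk)))
            (min_le_left _ _)))
        simpa [nsmul_eq_mul] using this
      have hlow2 : ((m - T : ℕ):ℝ) * (-C) ≤ ∑ k ∈ Finset.Ico T m, g (φ^[k] z) := by
        have := Finset.card_nsmul_le_sum (Finset.Ico T m) (fun k => g (φ^[k] z)) (-C)
          (fun k _ => by
            have := hC _ (hxS k)
            rw [Real.norm_eq_abs] at this
            linarith [(abs_le.1 this).1])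
        simpa [Nat.card_Ico, nsmul_eq_mul] using this
      have hcast : ((m - T : ℕ):ℝ) = (m:ℝ) - T := by rw [Nat.cast_sub hTm.le]
      rw [hcast] at hlow2
      have hmT : ((m:ℝ) - T) ≤ N := by
        have : (m:ℝ) < T + N := by exact_mod_cast hcase
        linarith
      have hTgt : (m:ℝ) - N < T := by
        have : (m:ℝ) < T + N := by exact_mod_cast hcase
        linarith
      rw [← hsplit] at hsum
      have h1 : ((m:ℝ) - N)*a < (T:ℝ)*a := mul_lt_mul_of_pos_right hTgt hapos
      have h2 : ((m:ℝ) - T)*C ≤ (N:ℝ)*C := mul_le_mul_of_nonneg_right hmT hC0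
      nlinarith
end

section
/- For a ∈ (0,1) and the map φ from the previous statement, every z ∈ S^(2n−1) with z ≠ P = (−1,0,…,0) satisfies φⁿ(z) → Q = (1,0,…,0) as n → ∞. -/
open Filter Topology

noncomputable def Dden {n : ℕ} (a : ℝ) (z : EuclideanSpace ℂ (Fin (n + 1))) : ℂ :=
  (1 - (a : ℂ) ^ 2) * z 0 + (1 + (a : ℂ) ^ 2)

noncomputable def phiMap {n : ℕ} (a : ℝ) (z : EuclideanSpace ℂ (Fin (n + 1))) :
    EuclideanSpace ℂ (Fin (n + 1)) :=
  WithLp.toLp 2 (fun i =>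
    if i = 0 then ((1 + (a : ℂ) ^ 2) * z 0 + (1 - (a : ℂ) ^ 2)) / Dden a z
    else (2 * a * z i) / Dden a z)

noncomputable def Ppt (n : ℕ) : EuclideanSpace ℂ (Fin (n + 1)) :=
  WithLp.toLp 2 (fun i => if i = 0 then -1 else 0)

noncomputable def Qpt (n : ℕ) : EuclideanSpace ℂ (Fin (n + 1)) :=
  WithLp.toLp 2 (fun i => if i = 0 then 1 else 0)

/-! The Cayley transform `s = (1 - w) / (1 + w)` conjugates the action of `φ` on the first
coordinate to multiplication by `a²`, so along an orbit `s_k = a^(2k) s_0 → 0` and the first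
coordinate tends to `1`. As `φ` preserves the unit sphere, on which `‖w - Q‖² = 2 - 2 Re w₀`,
the orbit tends to `Q`. The point `P` is the only point of the sphere with `w₀ = -1`, the pole of
the Cayley transform. -/

theorem norm_sub_single_sq {ι : Type*} [Fintype ι] [DecidableEq ι] (w : EuclideanSpace ℂ ι)
    (i : ι) (c : ℂ) :
    ‖w - EuclideanSpace.single i c‖ ^ 2 = ‖w‖ ^ 2 - 2 * (c * starRingEnd ℂ (w i)).re + ‖c‖ ^ 2 := by
  rw [@norm_sub_sq ℂ, EuclideanSpace.inner_single_right, PiLp.norm_single]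
  rfl

section Geometry

variable {n : ℕ}

theorem Qpt_eq_single : Qpt n = EuclideanSpace.single 0 1 := by
  ext i; simp [Qpt, PiLp.single_apply]

theorem Ppt_eq_single : Ppt n = EuclideanSpace.single 0 (-1) := by
  ext i; simp [Ppt, PiLp.single_apply]

theorem norm_sub_Qpt {w : EuclideanSpace ℂ (Fin (n + 1))} (hw : ‖w‖ = 1) :
    ‖w - Qpt n‖ = √(2 - 2 * (w 0).re) := by
  rw [← Real.sqrt_sq (norm_nonneg _), Qpt_eq_single, norm_sub_single_sq, hw]
  norm_num; ring_nf

theorem eq_Ppt_of_apply_zero_eq {w : EuclideanSpace ℂ (Fin (n + 1))} (hw : ‖w‖ = 1)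
    (h0 : w 0 = -1) : w = Ppt n := by
  have h : ‖w - Ppt n‖ ^ 2 = 0 := by
    rw [Ppt_eq_single, norm_sub_single_sq, hw, h0]; norm_num
  simpa [sub_eq_zero] using h

end Geometry

section PhiMap

variable {n : ℕ} {a : ℝ} {z : EuclideanSpace ℂ (Fin (n + 1))}

theorem phiMap_apply_zero :
    phiMap a z 0 = ((1 + (a : ℂ) ^ 2) * z 0 + (1 - (a : ℂ) ^ 2)) / Dden a z := by
  simp [phiMap]

theorem phiMap_apply_succ (i : Fin n) : phiMap a z i.succ = 2 * a * z i.succ / Dden a z := by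
  simp [phiMap, Fin.succ_ne_zero]

theorem Dden_re : (Dden a z).re = (1 - a ^ 2) * (z 0).re + (1 + a ^ 2) := by
  simp [Dden, ← Complex.ofReal_pow]

theorem Dden_ne_zero (ha : a ≠ 0) (hz : ‖z‖ ≤ 1) : Dden a z ≠ 0 := by
  obtain ⟨hre, hre'⟩ :=
    abs_le.mp (((Complex.abs_re_le_norm _).trans (PiLp.norm_apply_le z 0)).trans hz)
  have ha2 : 0 < a ^ 2 := by positivity
  -- `Re D = (1 + Re z₀) + a² (1 - Re z₀)`, a sum of two nonnegative terms that are not both zero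
  intro h
  have h0 := congrArg Complex.re h
  rw [Dden_re, Complex.zero_re] at h0
  rcases le_total (a ^ 2) 1 with h1 | h1 <;> nlinarith

theorem normSq_ofReal_mul_add_ofReal (A B : ℝ) (w : ℂ) :
    Complex.normSq (A * w + B) = A ^ 2 * Complex.normSq w + 2 * A * B * w.re + B ^ 2 := by
  simp only [Complex.normSq_apply, Complex.add_re, Complex.add_im, Complex.mul_re, Complex.mul_im,
    Complex.ofReal_re, Complex.ofReal_im]
  ring

theorem norm_sq_phi_numerator_add (a : ℝ) (w : ℂ) :
    ‖(1 + (a : ℂ) ^ 2) * w + (1 - (a : ℂ) ^ 2)‖ ^ 2 + 4 * a ^ 2 * (1 - ‖w‖ ^ 2) =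
      ‖(1 - (a : ℂ) ^ 2) * w + (1 + (a : ℂ) ^ 2)‖ ^ 2 := by
  have hp : 1 + (a : ℂ) ^ 2 = ((1 + a ^ 2 : ℝ) : ℂ) := by push_cast; rfl
  have hm : 1 - (a : ℂ) ^ 2 = ((1 - a ^ 2 : ℝ) : ℂ) := by push_cast; rfl
  simp only [hp, hm, Complex.sq_norm, normSq_ofReal_mul_add_ofReal]
  ring

theorem norm_phiMap (hz : ‖z‖ = 1) (hD : Dden a z ≠ 0) : ‖phiMap a z‖ = 1 := by
  have htail : ∑ i : Fin n, ‖z i.succ‖ ^ 2 = 1 - ‖z 0‖ ^ 2 := by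
    have h := EuclideanSpace.norm_sq_eq z
    rw [hz, Fin.sum_univ_succ] at h
    linarith
  have hsq : ‖phiMap a z‖ ^ 2 = 1 := by
    rw [EuclideanSpace.norm_sq_eq, Fin.sum_univ_succ]
    simp only [phiMap_apply_zero, phiMap_apply_succ, norm_div, norm_mul, div_pow, mul_pow,
      ← Finset.sum_div, ← Finset.mul_sum, htail]
    rw [← add_div, div_eq_one_iff_eq (by positivity), Dden, ← norm_sq_phi_numerator_add, Complex.norm_real, Real.norm_eq_abs, sq_abs]
    norm_num
  exact (pow_eq_one_iff_of_nonneg (norm_nonneg _) two_ne_zero).mp hsq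

theorem one_add_phiMap_apply_zero (hD : Dden a z ≠ 0) :
    1 + phiMap a z 0 = 2 * (1 + z 0) / Dden a z := by
  rw [phiMap_apply_zero, eq_div_iff hD, add_mul, div_mul_cancel₀ _ hD, Dden]
  ring

theorem one_sub_phiMap_apply_zero (hD : Dden a z ≠ 0) :
    1 - phiMap a z 0 = 2 * (a : ℂ) ^ 2 * (1 - z 0) / Dden a z := by
  rw [phiMap_apply_zero, eq_div_iff hD, sub_mul, div_mul_cancel₀ _ hD, Dden]
  ring

noncomputable def cayley (w : ℂ) : ℂ := (1 - w) / (1 + w)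

theorem cayley_cayley {w : ℂ} (hw : 1 + w ≠ 0) : cayley (cayley w) = w := by
  unfold cayley
  field_simp
  ring

theorem tendsto_cayley_nhds_zero : Tendsto cayley (𝓝 0) (𝓝 1) := by
  have h : ContinuousAt cayley 0 :=
    (continuousAt_const.sub continuousAt_id).div (continuousAt_const.add continuousAt_id)
      (by norm_num)
  simpa [cayley] using h.tendsto

theorem cayley_phiMap_apply_zero (hD : Dden a z ≠ 0) :
    cayley (phiMap a z 0) = (a : ℂ) ^ 2 * cayley (z 0) := by
  rw [cayley, one_sub_phiMap_apply_zero hD, one_add_phiMap_apply_zero hD,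
    div_div_div_cancel_right₀ hD, mul_assoc, mul_div_mul_left _ _ two_ne_zero, mul_div_assoc,
    cayley]

theorem mapsTo_phiMap (ha : a ≠ 0) :
    Set.MapsTo (phiMap a) {w : EuclideanSpace ℂ (Fin (n + 1)) | ‖w‖ = 1 ∧ w 0 ≠ -1}
      {w | ‖w‖ = 1 ∧ w 0 ≠ -1} := by
  rintro w ⟨hw, hw0⟩
  have hD := Dden_ne_zero ha hw.le
  have h1 : 1 + phiMap a w 0 ≠ 0 := by
    rw [one_add_phiMap_apply_zero hD]
    exact div_ne_zero (mul_ne_zero two_ne_zero fun h => hw0 (eq_neg_of_add_eq_zero_right h)) hD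
  exact ⟨norm_phiMap hw hD, fun h => h1 (by rw [h]; ring)⟩

theorem cayley_iterate_phiMap_apply_zero (ha : a ≠ 0) (hz : ‖z‖ = 1 ∧ z 0 ≠ -1) (k : ℕ) :
    cayley ((phiMap a)^[k] z 0) = ((a : ℂ) ^ 2) ^ k * cayley (z 0) := by
  induction k with
  | zero => simp
  | succ k ih =>
    have hD := Dden_ne_zero ha ((mapsTo_phiMap ha).iterate k hz).1.le
    rw [Function.iterate_succ_apply', cayley_phiMap_apply_zero hD, ih, pow_succ]
    ring

theorem tendsto_iterate_phiMap_apply_zero (ha : a ≠ 0) (ha1 : |a| < 1)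
    (hz : ‖z‖ = 1 ∧ z 0 ≠ -1) : Tendsto (fun k => (phiMap a)^[k] z 0) atTop (𝓝 1) := by
  have hpow : Tendsto (fun k => ((a : ℂ) ^ 2) ^ k * cayley (z 0)) atTop (𝓝 0) := by
    have h : ‖(a : ℂ) ^ 2‖ < 1 := by
      rw [norm_pow, Complex.norm_real, Real.norm_eq_abs]
      nlinarith [abs_nonneg a]
    simpa using (tendsto_pow_atTop_nhds_zero_of_norm_lt_one h).mul_const (cayley (z 0))
  refine (tendsto_cayley_nhds_zero.comp hpow).congr fun k => ?_
  have hk := ((mapsTo_phiMap ha).iterate k hz).2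
  rw [Function.comp_apply, ← cayley_iterate_phiMap_apply_zero ha hz,
    cayley_cayley fun h => hk (eq_neg_of_add_eq_zero_right h)]

end PhiMap

/-- For `a ∈ (0,1)`, every point of the unit sphere other than
`P = (-1,0,…,0)` converges to `Q = (1,0,…,0)` under iteration of `φ`. -/
theorem stmt_17 {n : ℕ} (a : ℝ) (ha : a ∈ Set.Ioo (0 : ℝ) 1)
    (z : EuclideanSpace ℂ (Fin (n + 1))) (hz : ‖z‖ = 1) (hzP : z ≠ Ppt n) :
    Tendsto (fun k => (phiMap a)^[k] z) atTop (𝓝 (Qpt n)) := by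
  have ha0 : a ≠ 0 := ha.1.ne'
  have hS : ‖z‖ = 1 ∧ z 0 ≠ -1 := ⟨hz, fun h => hzP (eq_Ppt_of_apply_zero_eq hz h)⟩
  have h0 := tendsto_iterate_phiMap_apply_zero ha0 (by rw [abs_of_pos ha.1]; exact ha.2) hS
  have hnorm (k : ℕ) : ‖(phiMap a)^[k] z - Qpt n‖ = √(2 - 2 * ((phiMap a)^[k] z 0).re) :=
    norm_sub_Qpt ((mapsTo_phiMap ha0).iterate k hS).1
  rw [tendsto_iff_norm_sub_tendsto_zero]
  simp_rw [hnorm]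
  have hcont : Continuous fun c : ℂ => √(2 - 2 * c.re) := by fun_prop
  simpa [Function.comp_def] using (hcont.tendsto 1).comp h0
end

section
/- Let Y be a compact metric space, φ: Y → Y continuous with fixed points p ≠ q such that q has arbitrarily small neighbourhoods U with φ(U) ⊂ U, the fixed point set of φ is {p, q}, and every limit point of every orbit (φⁿ(z)) is a fixed point of φ. If additionally no orbit of a point z ≠ p converges to p, then φⁿ(z) → q for all z ≠ p. -/
open Function Filter Topology Set

theorem tendsto_iterate_of_mapClusterPt_of_mapsTo_nhds {X : Type*} [TopologicalSpace X]
    {f : X → X} {x q : X} (hinv : ∀ U ∈ 𝓝 q, ∃ V ∈ 𝓝 q, V ⊆ U ∧ MapsTo f V V)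
    (hq : MapClusterPt q atTop (fun n => f^[n] x)) :
    Tendsto (fun n => f^[n] x) atTop (𝓝 q) := by
  refine tendsto_def.2 fun U hU => ?_
  obtain ⟨V, hV, hVU, hmaps⟩ := hinv U hU
  obtain ⟨N, hN⟩ := (mapClusterPt_iff_frequently.mp hq V hV).exists
  filter_upwards [eventually_ge_atTop N] with n hn
  obtain ⟨m, rfl⟩ := Nat.exists_eq_add_of_le hn
  show f^[N + m] x ∈ U
  rw [add_comm, iterate_add_apply]
  exact hVU (hmaps.iterate m hN)

theorem stmt_19_general
    {Y : Type*} [MetricSpace Y] [CompactSpace Y]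
    (φ : Y → Y)
    (p q : Y)
    (hattr : ∀ U ∈ 𝓝 q, ∃ V ∈ 𝓝 q, IsOpen V ∧ V ⊆ U ∧ Set.MapsTo φ V V)
    (hfix : ∀ z, φ z = z → z = p ∨ z = q)
    (hlim : ∀ z w : Y, MapClusterPt w atTop (fun n => φ^[n] z) → φ w = w)
    (hnotp : ∀ z, z ≠ p → ¬ Tendsto (fun n => φ^[n] z) atTop (𝓝 p)) :
    ∀ z, z ≠ p → Tendsto (fun n => φ^[n] z) atTop (𝓝 q) := by
  intro z hz
  refine tendsto_iterate_of_mapClusterPt_of_mapsTo_nhds (fun U hU => ?_) ?_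
  · obtain ⟨V, hV, -, hVU, hmaps⟩ := hattr U hU
    exact ⟨V, hV, hVU, hmaps⟩
  · by_contra hq
    refine hnotp z hz (tendsto_nhds_of_unique_mapClusterPt fun w hw => ?_)
    exact (hfix w (hlim z w hw)).resolve_right fun hwq => hq (hwq ▸ hw)

/-- Abstract dynamical argument: if the fixed point set is `{p, q}`, `q` is
attracting with arbitrarily small forward-invariant neighbourhoods, every
limit point of every orbit is a fixed point, and no orbit of a point `z ≠ p`
converges to `p`, then every orbit of a point `z ≠ p` converges to `q`. -/
theorem stmt_19
    {Y : Type*} [MetricSpace Y] [CompactSpace Y]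
    (φ : Y → Y) (hφ : Continuous φ)
    (p q : Y) (hpq : p ≠ q)
    (hfixp : φ p = p) (hfixq : φ q = q)
    (hattr : ∀ U ∈ 𝓝 q, ∃ V ∈ 𝓝 q, IsOpen V ∧ V ⊆ U ∧ Set.MapsTo φ V V)
    (hfix : ∀ z, φ z = z → z = p ∨ z = q)
    (hlim : ∀ z w : Y, MapClusterPt w atTop (fun n => φ^[n] z) → φ w = w)
    (hnotp : ∀ z, z ≠ p → ¬ Tendsto (fun n => φ^[n] z) atTop (𝓝 p)) :
    ∀ z, z ≠ p → Tendsto (fun n => φ^[n] z) atTop (𝓝 q) :=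
  stmt_19_general φ p q hattr hfix hlim hnotp
end
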